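/- Let R₁, R_z > 0, let μ be a Borel probability measure on ℝ^d supported in the closed ball B̄(R₁), let y ∈ B̄(R₁) and let z ∈ ℝ^d with ‖z‖ ≤ R_z. Define the matrix G(z, μ, y) = (exp(⟨z, y⟩) / γ₂(z, μ)) · ((y − γ(z, μ)) zᵀ + I), where I is the d×d identity matrix. Then ‖G(z, μ, y)‖_op ≤ (1 + 2 R₁ R_z) · exp(2 R₁ R_z). -/
import Mathlib


open MeasureTheory
open scoped RealInnerProductSpace

/-- The normalisation constant `γ₂(z, μ) = ∫ exp⟨z,y⟩ dμ(y)`. -/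
noncomputable def gamma2 {d : ℕ} (z : EuclideanSpace ℝ (Fin d))
    (μ : Measure (EuclideanSpace ℝ (Fin d))) : ℝ :=
  ∫ y, Real.exp ⟪z, y⟫ ∂μ

/-- The attention map `γ(z, μ) = (∫ exp⟨z,y⟩ • y dμ(y)) / γ₂(z, μ)`. -/
noncomputable def gammaAttn {d : ℕ} (z : EuclideanSpace ℝ (Fin d))
    (μ : Measure (EuclideanSpace ℝ (Fin d))) : EuclideanSpace ℝ (Fin d) :=
  (gamma2 z μ)⁻¹ • ∫ y, Real.exp ⟪z, y⟫ • y ∂μ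

/-- The Lions derivative `∂_μγ(z,μ)(y) = (exp⟨z,y⟩/γ₂(z,μ)) ((y − γ(z,μ)) zᵀ + I)`,
viewed as a continuous linear map on `ℝ^d` (the matrix `(y − γ) zᵀ` acts as
`v ↦ ⟨z, v⟩ (y − γ)`). -/
noncomputable def lionsDerivGamma {d : ℕ} (z : EuclideanSpace ℝ (Fin d))
    (μ : MeasureTheory.Measure (EuclideanSpace ℝ (Fin d))) (y : EuclideanSpace ℝ (Fin d)) :
    EuclideanSpace ℝ (Fin d) →L[ℝ] EuclideanSpace ℝ (Fin d) :=
  (Real.exp ⟪z, y⟫ / gamma2 z μ) •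
    ((innerSL ℝ z).smulRight (y - gammaAttn z μ) +
      ContinuousLinearMap.id ℝ (EuclideanSpace ℝ (Fin d)))

/-- Operator-norm bound on the Lions derivative of `γ` in its measure argument:
`‖∂_μγ(z,μ)(y)‖_op ≤ (1 + 2R₁R_z) exp(2R₁R_z)`. -/
theorem stmt_9 {d : ℕ} (R₁ Rz : ℝ) (hR₁ : 0 < R₁) (hRz : 0 < Rz)
    (μ : Measure (EuclideanSpace ℝ (Fin d))) [IsProbabilityMeasure μ]
    (hsupp : μ (Metric.closedBall 0 R₁) = 1)
    (y : EuclideanSpace ℝ (Fin d)) (hy : y ∈ Metric.closedBall (0 : EuclideanSpace ℝ (Fin d)) R₁)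
    (z : EuclideanSpace ℝ (Fin d)) (hz : ‖z‖ ≤ Rz) :
    ‖lionsDerivGamma z μ y‖ ≤ (1 + 2 * R₁ * Rz) * Real.exp (2 * R₁ * Rz) := by

  set c := R₁ * Rz with hc
  have hc0 : 0 < c := mul_pos hR₁ hRz
  -- a.e. membership in the ball
  have hae : ∀ᵐ x ∂μ, x ∈ Metric.closedBall (0 : EuclideanSpace ℝ (Fin d)) R₁ := by
    rw [ae_iff]
    have : μ (Metric.closedBall (0 : EuclideanSpace ℝ (Fin d)) R₁)ᶜ = 0 := by
      rw [measure_compl (measurableSet_closedBall) (measure_ne_top μ _), hsupp,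
        measure_univ]
      simp
    exact this
  have hball : ∀ x : EuclideanSpace ℝ (Fin d),
      x ∈ Metric.closedBall (0 : EuclideanSpace ℝ (Fin d)) R₁ → |⟪z, x⟫| ≤ c := by
    intro x hx
    rw [Metric.mem_closedBall, dist_zero_right] at hx
    calc |⟪z, x⟫| ≤ ‖z‖ * ‖x‖ := abs_real_inner_le_norm z x
    _ ≤ Rz * R₁ := by
        apply mul_le_mul hz hx (norm_nonneg _) (le_of_lt hRz)
    _ = c := by ring
  have haebd : ∀ᵐ x ∂μ, |⟪z, x⟫| ≤ c := hae.mono fun x hx => hball x hx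
  have hcont : Continuous fun x : EuclideanSpace ℝ (Fin d) => Real.exp ⟪z, x⟫ :=
    Real.continuous_exp.comp (continuous_const.inner continuous_id)
  have hInt1 : Integrable (fun x => Real.exp ⟪z, x⟫) μ := by
    refine (integrable_const (Real.exp c)).mono' hcont.aestronglyMeasurable ?_
    refine haebd.mono fun x hx => ?_
    rw [Real.norm_eq_abs, abs_of_pos (Real.exp_pos _)]
    exact Real.exp_le_exp.2 (le_of_abs_le hx)
  have hγ₂_lb : Real.exp (-c) ≤ gamma2 z μ := by
    have := integral_mono_ae (integrable_const (Real.exp (-c))) hInt1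
      (haebd.mono fun x hx => Real.exp_le_exp.2 (neg_le_of_abs_le hx))
    simpa [gamma2] using this
  have hγ₂_pos : 0 < gamma2 z μ := lt_of_lt_of_le (Real.exp_pos _) hγ₂_lb
  -- bound on gammaAttn
  have hInt2 : Integrable (fun x => Real.exp ⟪z, x⟫ • x) μ := by
    refine (integrable_const (Real.exp c * R₁)).mono'
      (hcont.smul continuous_id).aestronglyMeasurable ?_
    refine hae.mono fun x hx => ?_
    rw [Metric.mem_closedBall, dist_zero_right] at hx
    rw [norm_smul, Real.norm_eq_abs, abs_of_pos (Real.exp_pos _)]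
    exact mul_le_mul (Real.exp_le_exp.2 (le_of_abs_le (hball x (by
      simpa [Metric.mem_closedBall, dist_zero_right] using hx))))
      hx (norm_nonneg _) (le_of_lt (Real.exp_pos _))
  have hγ_bd : ‖gammaAttn z μ‖ ≤ R₁ := by
    have h1 : ‖∫ x, Real.exp ⟪z, x⟫ • x ∂μ‖ ≤ R₁ * gamma2 z μ := by
      have := norm_integral_le_integral_norm (μ := μ) (fun x => Real.exp ⟪z, x⟫ • x)
      refine this.trans ?_
      have h2 : ∫ x, ‖Real.exp ⟪z, x⟫ • x‖ ∂μ ≤ ∫ x, R₁ * Real.exp ⟪z, x⟫ ∂μ := by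
        refine integral_mono_ae hInt2.norm (hInt1.const_mul R₁) ?_
        refine hae.mono fun x hx => ?_
        rw [Metric.mem_closedBall, dist_zero_right] at hx
        dsimp only
        rw [norm_smul, Real.norm_eq_abs, abs_of_pos (Real.exp_pos _), mul_comm R₁]
        exact mul_le_mul_of_nonneg_left hx (le_of_lt (Real.exp_pos _))
      refine h2.trans ?_
      rw [integral_const_mul, gamma2]
    rw [gammaAttn, norm_smul, Real.norm_eq_abs, abs_of_pos (inv_pos.2 hγ₂_pos)]
    calc (gamma2 z μ)⁻¹ * ‖∫ x, Real.exp ⟪z, x⟫ • x ∂μ‖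
        ≤ (gamma2 z μ)⁻¹ * (R₁ * gamma2 z μ) := by
          exact mul_le_mul_of_nonneg_left h1 (le_of_lt (inv_pos.2 hγ₂_pos))
      _ = R₁ := by field_simp
  -- now the operator norm bound
  have hymγ : ‖y - gammaAttn z μ‖ ≤ 2 * R₁ := by
    rw [Metric.mem_closedBall, dist_zero_right] at hy
    calc ‖y - gammaAttn z μ‖ ≤ ‖y‖ + ‖gammaAttn z μ‖ := norm_sub_le _ _
      _ ≤ R₁ + R₁ := add_le_add hy hγ_bd
      _ = 2 * R₁ := by ring
  have hopA : ‖(innerSL ℝ z).smulRight (y - gammaAttn z μ) +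
      ContinuousLinearMap.id ℝ (EuclideanSpace ℝ (Fin d))‖ ≤ 2 * R₁ * Rz + 1 := by
    refine (norm_add_le _ _).trans ?_
    have h1 : ‖(innerSL ℝ z).smulRight (y - gammaAttn z μ)‖ ≤ 2 * R₁ * Rz := by
      rw [ContinuousLinearMap.norm_smulRight_apply, innerSL_apply_norm]
      calc ‖z‖ * ‖y - gammaAttn z μ‖ ≤ Rz * (2 * R₁) :=
            mul_le_mul hz hymγ (norm_nonneg _) (le_of_lt hRz)
        _ = 2 * R₁ * Rz := by ring
    exact add_le_add h1 ContinuousLinearMap.norm_id_le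
  have hscal : Real.exp ⟪z, y⟫ / gamma2 z μ ≤ Real.exp (2 * c) := by
    rw [div_le_iff₀ hγ₂_pos]
    calc Real.exp ⟪z, y⟫ ≤ Real.exp c := Real.exp_le_exp.2 (le_of_abs_le (hball y hy))
      _ = Real.exp (2 * c) * Real.exp (-c) := by
          rw [← Real.exp_add]; ring_nf
      _ ≤ Real.exp (2 * c) * gamma2 z μ :=
          mul_le_mul_of_nonneg_left hγ₂_lb (le_of_lt (Real.exp_pos _))
  have hscal0 : 0 ≤ Real.exp ⟪z, y⟫ / gamma2 z μ :=
    div_nonneg (le_of_lt (Real.exp_pos _)) (le_of_lt hγ₂_pos)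
  rw [lionsDerivGamma]
  refine (norm_smul_le (Real.exp ⟪z, y⟫ / gamma2 z μ) ((innerSL ℝ z).smulRight (y - gammaAttn z μ) + ContinuousLinearMap.id ℝ (EuclideanSpace ℝ (Fin d)))).trans ?_
  rw [Real.norm_eq_abs, abs_of_nonneg hscal0]
  calc Real.exp ⟪z, y⟫ / gamma2 z μ * ‖(innerSL ℝ z).smulRight (y - gammaAttn z μ) +
      ContinuousLinearMap.id ℝ (EuclideanSpace ℝ (Fin d))‖
      ≤ Real.exp (2 * c) * (2 * R₁ * Rz + 1) := by
        exact mul_le_mul hscal hopA (norm_nonneg _) (le_of_lt (Real.exp_pos _))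
    _ = (1 + 2 * R₁ * Rz) * Real.exp (2 * R₁ * Rz) := by rw [hc]; ring
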